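/- Let Q be a commutative unital quantale and Σ a class of ideals with the quantale topology. Then Σ is a T₁-space if and only if every member of Σ is a maximal ideal of Q, provided Σ contains, for each of its members I, some maximal ideal above I. More precisely (as stated in the paper): Σ is T₁ if and only if for every I ∈ Σ and every maximal ideal M ⊇ I one has M = I; in particular, if Max(Q) ⊆ Σ, then Σ is T₁ iff Σ ⊆ Max(Q) (iff Σ consists of maximal ideals). -/

import Mathlib

namespace QuantalePaper

/-- An ideal of a complete lattice: nonempty, downward closed, closed under binary joins. -/
structure QIdeal (Q : Type*) [CompleteLattice Q] where
  carrier : Set Q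
  nonempty' : carrier.Nonempty
  sup_mem' : ∀ ⦃x⦄, x ∈ carrier → ∀ ⦃y⦄, y ∈ carrier → x ⊔ y ∈ carrier
  lower' : ∀ ⦃x⦄, x ∈ carrier → ∀ ⦃l : Q⦄, l ≤ x → l ∈ carrier

namespace QIdeal

variable {Q : Type*} [CompleteLattice Q]

instance : SetLike (QIdeal Q) Q where
  coe := carrier
  coe_injective := by rintro ⟨a,_,_,_⟩ ⟨b,_,_,_⟩ h; simpa using h

instance : PartialOrder (QIdeal Q) := .ofSetLike (QIdeal Q) Q

/-- A proper ideal. -/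
def IsProper (I : QIdeal Q) : Prop := (⊤ : Q) ∉ I

/-- A maximal ideal: a proper ideal maximal among proper ideals. -/
def IsMaximal (I : QIdeal Q) : Prop :=
  I.IsProper ∧ ∀ J : QIdeal Q, J.IsProper → I ≤ J → J = I

/-- A prime ideal. -/
def IsPrime [Mul Q] (I : QIdeal Q) : Prop :=
  I.IsProper ∧ ∀ x y : Q, x * y ∈ I → x ∈ I ∨ y ∈ I

end QIdeal

variable {Q : Type*} [CompleteLattice Q]

/-- The subbasic closed set `I↑ ∩ Σ` inside the subtype of a class `S` of ideals. -/
def up (S : Set (QIdeal Q)) (I : QIdeal Q) : Set ↥S := {J : ↥S | (I : Set Q) ⊆ (J : QIdeal Q)}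

/-- The quantale topology on a class `S` of ideals, generated by the sets `up S I`
as a subbasis of closed sets. -/
def qTop (S : Set (QIdeal Q)) : TopologicalSpace ↥S :=
  .generateFrom {U | ∃ I : QIdeal Q, U = (up S I)ᶜ}

/-- `X↑` for a set `X` of ideals: members of `S` containing the intersection `⋀X`,
with `∅↑ = ∅`. -/
def upSet (S : Set (QIdeal Q)) (X : Set (QIdeal Q)) : Set ↥S :=
  {J : ↥S | X.Nonempty ∧ ∀ x : Q, (∀ I ∈ X, x ∈ I) → x ∈ (J : QIdeal Q)}

/-! The closure of a point `I` of `Σ` is `I↑ ∩ Σ`, so specialization in `Σ` is inclusion of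
ideals. Hence `Σ` is T₁ exactly when it is an antichain, and since every member of `Σ` lies
below a maximal member, `Σ` is an antichain exactly when all its members are maximal. -/

section QuantaleTopology

attribute [local instance] qTop

variable {S : Set (QIdeal Q)}

lemma isClosed_up (I : QIdeal Q) : IsClosed (up S I) :=
  ⟨.basic _ ⟨I, rfl⟩⟩

lemma specializes_iff_le {I J : S} : I ⤳ J ↔ (I : QIdeal Q) ≤ J := by
  refine ⟨fun h => h.mem_closed (isClosed_up (I : QIdeal Q)) fun _ hx => hx, fun hIJ => ?_⟩
  rw [specializes_iff_pure, ← Filter.tendsto_id']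
  refine TopologicalSpace.tendsto_nhds_generateFrom_iff.2 ?_
  rintro _ ⟨K, rfl⟩ hJ hKI
  exact hJ (hKI.trans hIJ)

theorem t1Space_iff_isAntichain : T1Space S ↔ IsAntichain (· ≤ ·) S := by
  rw [t1Space_iff_specializes_imp_eq]
  refine ⟨fun h I hI J hJ hne hle => hne ?_, fun h I J hIJ => ?_⟩
  · exact Subtype.ext_iff.1 (h (specializes_iff_le.2 hle : (⟨I, hI⟩ : S) ⤳ ⟨J, hJ⟩))
  · exact Subtype.ext (h.eq I.2 J.2 (specializes_iff_le.1 hIJ))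

end QuantaleTopology

namespace QIdeal

lemma IsMaximal.eq_of_le {I J : QIdeal Q} (hI : I.IsMaximal) (hJ : J.IsProper) (h : I ≤ J) :
    I = J :=
  (hI.2 J hJ h).symm

end QIdeal

lemma isAntichain_iff_forall_isMaximal {S : Set (QIdeal Q)}
    (hmax : ∀ I ∈ S, ∃ M ∈ S, QIdeal.IsMaximal M ∧ I ≤ M) :
    IsAntichain (· ≤ ·) S ↔ ∀ I ∈ S, I.IsMaximal := by
  refine ⟨fun hS I hI => ?_, fun hS => ?_⟩
  · obtain ⟨M, hM, hMmax, hIM⟩ := hmax I hI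
    exact hS.eq hI hM hIM ▸ hMmax
  · exact fun I hI J hJ hne hle => hne ((hS I hI).eq_of_le (hS J hJ).1 hle)

theorem stmt10_general (S : Set (QIdeal Q))
    (hmax : ∀ I ∈ S, ∃ M ∈ S, QIdeal.IsMaximal M ∧ I ≤ M) :
    @T1Space ↥S (qTop S) ↔ ∀ I ∈ S, QIdeal.IsMaximal I :=
  letI := qTop S
  t1Space_iff_isAntichain.trans (isAntichain_iff_forall_isMaximal hmax)

theorem stmt10 [CommMonoid Q] [IsQuantale Q] (htop : (1 : Q) = ⊤) (S : Set (QIdeal Q))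
    (hmax : ∀ I ∈ S, ∃ M ∈ S, QIdeal.IsMaximal M ∧ I ≤ M) :
    @T1Space ↥S (qTop S) ↔ ∀ I ∈ S, QIdeal.IsMaximal I :=
  stmt10_general S hmax

end QuantalePaper
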